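/- For every θ ∈ ℋ (zero-mean L²(𝕋²)) and γ < 1, the resonant product θ∘Kθ lies in the Sobolev space H^γ(𝕋²) with the quantitative bound ‖θ∘Kθ‖²_{H^γ} ≲ ‖θ‖⁴_{L²(𝕋²)} · Σ_{k∈ℤ², k≠0} |k|^{2γ−4}, the last series being finite for γ < 1. -/

import Mathlib

noncomputable section

open MeasureTheory ProbabilityTheory Filter Topology

namespace GPAM

/-- Frequencies: the dual lattice `ℤ²` of the two-dimensional torus `𝕋²`. -/
abbrev Freq : Type := ℤ × ℤ

/-- A periodic distribution on `𝕋²`, represented by its Fourier coefficients. -/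
abbrev Dist : Type := Freq → ℂ

def toR (k : Freq) : ℝ × ℝ := ((k.1 : ℝ), (k.2 : ℝ))

/-- Euclidean norm on `ℝ²`. -/
def enorm2 (x : ℝ × ℝ) : ℝ := Real.sqrt (x.1 ^ 2 + x.2 ^ 2)

/-- `|k|` for a frequency `k ∈ ℤ²`. -/
def freqNorm (k : Freq) : ℝ := enorm2 (toR k)

/-- Evaluation of a Fourier series at a point `x` of (a fundamental domain of) `𝕋²`. -/
def eval (a : Dist) (x : ℝ × ℝ) : ℂ :=
  ∑' k : Freq, a k * Complex.exp (Complex.I * (((k.1 : ℝ) * x.1 + (k.2 : ℝ) * x.2 : ℝ) : ℂ))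

/-- The `L^∞` norm of (the function represented by) `a`. -/
def supNorm (a : Dist) : ℝ := ⨆ x : ℝ × ℝ, ‖eval a x‖

/-- A Littlewood–Paley pair `(χ, ρ)` on `ℝ²`. -/
structure LP where
  chi : ℝ × ℝ → ℝ
  rho : ℝ × ℝ → ℝ
  chi_smooth : ContDiff ℝ (⊤ : ℕ∞) chi
  rho_smooth : ContDiff ℝ (⊤ : ℕ∞) rho
  chi_nonneg : ∀ x, 0 ≤ chi x
  rho_nonneg : ∀ x, 0 ≤ rho x
  chi_radial : ∀ x y, enorm2 x = enorm2 y → chi x = chi y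
  rho_radial : ∀ x y, enorm2 x = enorm2 y → rho x = rho y
  chi_ball : ∃ R : ℝ, 0 < R ∧ ∀ x, R ≤ enorm2 x → chi x = 0
  rho_annulus : ∃ r R : ℝ, 0 < r ∧ r < R ∧ ∀ x, enorm2 x < r ∨ R < enorm2 x → rho x = 0
  partition : ∀ x, chi x + ∑' j : ℕ, rho ((2 : ℝ) ^ (-(j : ℤ)) • x) = 1
  disj_chi_rho : ∀ j : ℕ, 1 ≤ j → ∀ x, chi x * rho ((2 : ℝ) ^ (-(j : ℤ)) • x) = 0
  disj_rho_rho : ∀ i j : ℕ, 1 < |(i : ℤ) - (j : ℤ)| →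
    ∀ x, rho ((2 : ℝ) ^ (-(i : ℤ)) • x) * rho ((2 : ℝ) ^ (-(j : ℤ)) • x) = 0

/-- The Littlewood–Paley block `Δ_j`, `j ≥ -1`, acting on Fourier coefficients. -/
def LP.block (L : LP) (j : ℤ) (a : Dist) : Dist := fun k =>
  if j = -1 then (L.chi (toR k) : ℂ) * a k
  else ((L.rho ((2 : ℝ) ^ (-j) • toR k) : ℝ) : ℂ) * a k

/-- The Besov–Hölder norm `‖a‖_β = sup_{j ≥ -1} 2^{jβ} ‖Δ_j a‖_{L^∞}` of `𝒞^β = B^β_{∞,∞}`. -/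
def LP.besov (L : LP) (β : ℝ) (a : Dist) : ℝ :=
  ⨆ j : ℕ, (2 : ℝ) ^ (β * ((j : ℝ) - 1)) * supNorm (L.block ((j : ℤ) - 1) a)

/-- Membership in `𝒞^β(𝕋²)`: the quantities defining the Besov norm are bounded. -/
def LP.memBesov (L : LP) (β : ℝ) (a : Dist) : Prop :=
  BddAbove (Set.range fun j : ℕ =>
    (2 : ℝ) ^ (β * ((j : ℝ) - 1)) * supNorm (L.block ((j : ℤ) - 1) a))

/-- Product of two periodic distributions (convolution of Fourier coefficients). -/
def mulD (a b : Dist) : Dist := fun k => ∑' p : Freq, a p * b (k - p)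

/-- The resonant product `f ∘ g = Σ_{|i-j| ≤ 1} Δ_i f Δ_j g`. -/
def LP.reson (L : LP) (f g : Dist) : Dist := fun k =>
  ∑' ij : ℤ × ℤ,
    if -1 ≤ ij.1 ∧ -1 ≤ ij.2 ∧ |ij.1 - ij.2| ≤ 1 then
      mulD (L.block ij.1 f) (L.block ij.2 g) k
    else 0

/-- The paraproduct `f ≺ g = Σ_j Σ_{i < j-1} Δ_i f Δ_j g`. -/
def LP.para (L : LP) (f g : Dist) : Dist := fun k =>
  ∑' ij : ℤ × ℤ,
    if -1 ≤ ij.1 ∧ -1 ≤ ij.2 ∧ ij.1 < ij.2 - 1 then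
      mulD (L.block ij.1 f) (L.block ij.2 g) k
    else 0

/-- `K = (-Δ)⁻¹`, acting on zero-mean distributions via `ℱ(Kθ)(k) = |k|⁻² ℱθ(k)`. -/
def Kop (a : Dist) : Dist := fun k => if k = 0 then 0 else a k / ((freqNorm k ^ 2 : ℝ) : ℂ)

/-- The constant function `c` on the torus, as a distribution. -/
def constD (c : ℝ) : Dist := fun k => if k = 0 then (c : ℂ) else 0

/-- The canonical enhancement `(θ, θ ∘ Kθ - c)` of a (nice) distribution `θ`. -/
def lift (L : LP) (θ : Dist) (c : ℝ) : Dist × Dist := (θ, L.reson θ (Kop θ) - constD c)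

/-- Distance in `ℋ^α = 𝒞^{α-2} × 𝒞^{2α-2}` (sum norm). -/
def hDist (L : LP) (α : ℝ) (Ξ Ξ' : Dist × Dist) : ℝ :=
  L.besov (α - 2) (Ξ.1 - Ξ'.1) + L.besov (2 * α - 2) (Ξ.2 - Ξ'.2)

/-- Closure of a set of pairs with respect to the `ℋ^α` distance. -/
def clos (L : LP) (α : ℝ) (S : Set (Dist × Dist)) : Set (Dist × Dist) :=
  {Ξ | ∀ δ : ℝ, 0 < δ → ∃ Ξ' ∈ S, hDist L α Ξ Ξ' < δ}

/-- `θ` is a real zero-mean `L²` function (an element of the Cameron–Martin space `ℋ`). -/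
def IsZeroMeanL2 (a : Dist) : Prop :=
  a 0 = 0 ∧ Summable (fun k : Freq => ‖a k‖ ^ 2) ∧ ∀ k, star (a k) = a (-k)

/-- The `L²(𝕋²)`-norm. -/
def l2norm (a : Dist) : ℝ := Real.sqrt (∑' k : Freq, ‖a k‖ ^ 2)

/-- `a` is a real smooth function on `𝕋²` (rapidly decaying coefficients). -/
def IsSmoothD (a : Dist) : Prop :=
  (∀ k, star (a k) = a (-k)) ∧
    ∀ n : ℕ, ∃ C : ℝ, ∀ k : Freq, ‖a k‖ * (1 + freqNorm k) ^ n ≤ C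

/-- `a` is a real smooth function with zero mean on `𝕋²`. -/
def IsSmoothZeroMean (a : Dist) : Prop := a 0 = 0 ∧ IsSmoothD a

/-- The space `𝒳^α`: closure in `ℋ^α` of the canonical enhancements of smooth
zero-mean functions. -/
def Xspace (L : LP) (α : ℝ) : Set (Dist × Dist) :=
  clos L α {Ξ | ∃ θ : Dist, ∃ c : ℝ, IsSmoothZeroMean θ ∧ Ξ = lift L θ c}

/-- Membership in `𝒞^{0,β}(𝕋²)`, the closure of smooth functions in `𝒞^β(𝕋²)`. -/
def MemC0 (L : LP) (β : ℝ) (a : Dist) : Prop :=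
  ∀ δ : ℝ, 0 < δ → ∃ b : Dist, IsSmoothD b ∧ L.besov β (a - b) < δ

/-- Membership in `Č^{0,β}(𝕋²)`, the closure of smooth zero-mean functions in `𝒞^β(𝕋²)`. -/
def MemC0check (L : LP) (β : ℝ) (a : Dist) : Prop :=
  ∀ δ : ℝ, 0 < δ → ∃ b : Dist, IsSmoothZeroMean b ∧ L.besov β (a - b) < δ

/-- The translation operator `T_h Ξ = (Ξ¹ + h, Ξ² + h∘Kh + h∘KΞ¹ + Ξ¹∘Kh)`. -/
def Th (L : LP) (h : Dist) (Ξ : Dist × Dist) : Dist × Dist :=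
  (Ξ.1 + h, Ξ.2 + L.reson h (Kop h) + L.reson h (Kop Ξ.1) + L.reson Ξ.1 (Kop h))

/-- An admissible mollifier `ψ`. -/
structure IsMollifier (ψ : ℝ × ℝ → ℝ) : Prop where
  radial : ∀ x y, enorm2 x = enorm2 y → ψ x = ψ y
  bounded : ∃ C : ℝ, ∀ x, |ψ x| ≤ C
  compactSupp : ∃ R : ℝ, 0 < R ∧ ∀ x, R ≤ enorm2 x → ψ x = 0
  contAtZero : ContinuousAt ψ 0
  oneAtZero : ψ 0 = 1

/-- Mollification: `ξ^ε = Σ_{k ≠ 0} ψ(εk) ξ̂(k) e_k`. -/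
def mollify (ψ : ℝ × ℝ → ℝ) (ε : ℝ) (a : Dist) : Dist := fun k =>
  if k = 0 then 0 else ((ψ (ε • toR k) : ℝ) : ℂ) * a k

/-- The renormalisation constant `c_ε = Σ_{k ≠ 0} |ψ(εk)|² / |k|²`. -/
def cEps (ψ : ℝ × ℝ → ℝ) (ε : ℝ) : ℝ :=
  ∑' k : Freq, if k = 0 then 0 else ψ (ε • toR k) ^ 2 / freqNorm k ^ 2

/-- The constant `b_ε = Σ_{k ≠ 0} ψ(εk) / |k|²`. -/
def bEps (ψ : ℝ × ℝ → ℝ) (ε : ℝ) : ℝ :=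
  ∑' k : Freq, if k = 0 then 0 else ψ (ε • toR k) / freqNorm k ^ 2

/-- Choice of "positive" frequencies: one from each pair `{k, -k}`, `k ≠ 0`. -/
def posFreq (k : Freq) : Prop := 0 < k.1 ∨ (k.1 = 0 ∧ 0 < k.2)

/-- `ξ` is a zero-mean spatial white noise on `𝕋²` under the probability measure `P`:
its Fourier coefficients `ξ̂(k)`, `k ≠ 0`, form a family of standard complex Gaussians
(independent real and imaginary parts of variance 1/2, independent over a choice of
half-lattice), `ξ̂(0) = 0` and `ξ̂(-k) = conj ξ̂(k)`. -/
structure IsWhiteNoise {Ω : Type} [MeasurableSpace Ω] (P : Measure Ω) (ξ : Ω → Dist) :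
    Prop where
  meas : ∀ k : Freq, Measurable fun ω => ξ ω k
  zeroMean : ∀ᵐ ω ∂P, ξ ω 0 = 0
  isReal : ∀ᵐ ω ∂P, ∀ k, star (ξ ω k) = ξ ω (-k)
  gaussRe : ∀ k : Freq, posFreq k → P.map (fun ω => (ξ ω k).re) = gaussianReal 0 (1 / 2)
  gaussIm : ∀ k : Freq, posFreq k → P.map (fun ω => (ξ ω k).im) = gaussianReal 0 (1 / 2)
  indep : iIndepFun
    (fun (p : {k : Freq // posFreq k} × Bool) (ω : Ω) =>
      if p.2 then (ξ ω p.1.1).re else (ξ ω p.1.1).im) P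

/-- `Ξ` lies in the support of the law of `X : Ω → ℋ^α`. -/
def inSupp {Ω : Type} [MeasurableSpace Ω] (P : Measure Ω) (L : LP) (α : ℝ)
    (X : Ω → Dist × Dist) (Ξ : Dist × Dist) : Prop :=
  ∀ δ : ℝ, 0 < δ → 0 < P {ω | hDist L α (X ω) Ξ < δ}

/-- `x` lies in the support of the law of `X : Ω → 𝒞^β`. -/
def inSupp1 {Ω : Type} [MeasurableSpace Ω] (P : Measure Ω) (L : LP) (β : ℝ)
    (X : Ω → Dist) (x : Dist) : Prop :=
  ∀ δ : ℝ, 0 < δ → 0 < P {ω | L.besov β (X ω - x) < δ}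

/-- The heat semigroup `P_t = e^{tΔ}` on Fourier coefficients. -/
def heat (t : ℝ) (a : Dist) : Dist := fun k =>
  ((Real.exp (-t * freqNorm k ^ 2) : ℝ) : ℂ) * a k

/-- Fourier coefficients of a function on `𝕋² = (ℝ/2πℤ)²`. -/
def fourierCoeff2 (u : ℝ × ℝ → ℂ) (k : Freq) : ℂ :=
  ((1 / (2 * Real.pi) ^ 2 : ℝ) : ℂ) *
    ∫ x in Set.Icc (0 : ℝ) (2 * Real.pi) ×ˢ Set.Icc (0 : ℝ) (2 * Real.pi),
      u x * Complex.exp (-Complex.I * (((k.1 : ℝ) * x.1 + (k.2 : ℝ) * x.2 : ℝ) : ℂ))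

/-- Composition of a real nonlinearity `f` with (the function represented by) `a`,
as a distribution: the Fourier coefficients of `x ↦ f(a(x))`. -/
def compF (f : ℝ → ℝ) (a : Dist) : Dist := fun k =>
  fourierCoeff2 (fun x => ((f ((eval a x).re) : ℝ) : ℂ)) k

/-- Mild solution of `∂ₜ v - Δ v = f(v) h - c f'(v) f(v)`, `v(0) = u₀`, i.e.
`v_t = P_t u₀ + ∫₀ᵗ P_{t-s}(f(v_s) h) ds - c ∫₀ᵗ P_{t-s}(f'(v_s) f(v_s)) ds`. -/
def IsMildSol (f : ℝ → ℝ) (h : Dist) (c : ℝ) (u0 : Dist) (v : ℝ → Dist) : Prop :=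
  ∀ t : ℝ, 0 ≤ t → ∀ k : Freq,
    v t k =
      heat t u0 k
        + (∫ s in (0 : ℝ)..t, heat (t - s) (mulD (compF f (v s)) h) k)
        - (c : ℂ) * ∫ s in (0 : ℝ)..t,
            heat (t - s) (compF (fun y => deriv f y * f y) (v s)) k

/-- The distance of `C([0,T], 𝒞^β(𝕋²))`. -/
def cBesovDist (L : LP) (β T : ℝ) (v w : ℝ → Dist) : ℝ :=
  ⨆ t : Set.Icc (0 : ℝ) T, L.besov β (v t - w t)

/-- Closure of a set of time-dependent distributions in `C([0,T], 𝒞^β(𝕋²))`. -/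
def closC (L : LP) (β T : ℝ) (S : Set (ℝ → Dist)) : Set (ℝ → Dist) :=
  {v | ∀ δ : ℝ, 0 < δ → ∃ w ∈ S, cBesovDist L β T v w < δ}

/-- The distance of `C([0,T], L²(𝕋²))`. -/
def cL2dist (T : ℝ) (v w : ℝ → Dist) : ℝ :=
  ⨆ t : Set.Icc (0 : ℝ) T, l2norm (v t - w t)

/-- `a` is a real `L²(𝕋²)` function. -/
def IsL2 (a : Dist) : Prop :=
  Summable (fun k : Freq => ‖a k‖ ^ 2) ∧ ∀ k, star (a k) = a (-k)

/-- Continuity in time with values in `L²(𝕋²)`, on `[0,T]`. -/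
def ContL2 (T : ℝ) (v : ℝ → Dist) : Prop :=
  ∀ t ∈ Set.Icc (0 : ℝ) T, ∀ ε : ℝ, 0 < ε → ∃ δ : ℝ, 0 < δ ∧
    ∀ s ∈ Set.Icc (0 : ℝ) T, |s - t| < δ → l2norm (v s - v t) < ε

/-- `f ∈ C³_b(ℝ)`: three times continuously differentiable with bounded derivatives. -/
def C3b (f : ℝ → ℝ) : Prop :=
  ContDiff ℝ 3 f ∧ ∀ i : ℕ, i ≤ 3 → ∃ C : ℝ, ∀ x : ℝ, |iteratedDeriv i f x| ≤ C

/-- The inhomogeneous Sobolev "square norm" `Σ_k (1+|k|²)^γ |û(k)|²` of `H^γ(𝕋²)`. -/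
def sobSum (γ : ℝ) (a : Dist) : ℝ := ∑' k : Freq, (1 + freqNorm k ^ 2) ^ γ * ‖a k‖ ^ 2

/-- The highly oscillatory functions `X^{n,c}(x) = √c 2^{n+1} cos(2ⁿ ⟨(1,1), x⟩)`. -/
def Xosc (n : ℕ) (c : ℝ) : Dist := fun k =>
  if k = ((2 ^ n : ℤ), (2 ^ n : ℤ)) ∨ k = (-(2 ^ n : ℤ), -(2 ^ n : ℤ)) then
    ((Real.sqrt c * 2 ^ n : ℝ) : ℂ)
  else 0

/-- Truncation of a distribution to frequencies `0 < |k| ≤ ν 2ⁿ`. -/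
def truncD (ν : ℝ) (n : ℕ) (a : Dist) : Dist := fun k =>
  if k ≠ 0 ∧ freqNorm k ≤ ν * 2 ^ n then a k else 0

/-- The constant `c_n = Σ_{0 < |k| ≤ ν 2ⁿ} |k|⁻²`. -/
def cTrunc (ν : ℝ) (n : ℕ) : ℝ :=
  ∑' k : Freq, if k ≠ 0 ∧ freqNorm k ≤ ν * 2 ^ n then 1 / freqNorm k ^ 2 else 0

end GPAM


namespace RKB
open GPAM ENNReal

lemma enorm2_nonneg (x : ℝ × ℝ) : 0 ≤ enorm2 x := Real.sqrt_nonneg _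

lemma freqNorm_nonneg (k : Freq) : 0 ≤ freqNorm k := Real.sqrt_nonneg _

lemma enorm2_eq_abs (z : ℝ × ℝ) : enorm2 z = ‖(⟨z.1, z.2⟩ : ℂ)‖ := by
  rw [Complex.norm_def, Complex.normSq_mk]
  simp only [GPAM.enorm2]
  congr 1; ring

lemma enorm2_triangle (x y : ℝ × ℝ) : enorm2 (x + y) ≤ enorm2 x + enorm2 y := by
  rw [enorm2_eq_abs, enorm2_eq_abs, enorm2_eq_abs]
  have h : (⟨(x+y).1, (x+y).2⟩ : ℂ) = ⟨x.1, x.2⟩ + ⟨y.1, y.2⟩ := by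
    apply Complex.ext <;> simp [Complex.add_re, Complex.add_im]
  rw [h]
  exact norm_add_le _ _

lemma freqNorm_add (p q : Freq) : freqNorm (p + q) ≤ freqNorm p + freqNorm q := by
  have h : toR (p + q) = toR p + toR q := by
    simp only [GPAM.toR, Prod.mk_add_mk, Prod.ext_iff]
    constructor <;> push_cast <;> simp
  unfold GPAM.freqNorm
  rw [h]
  exact enorm2_triangle _ _

lemma one_le_freqNorm {k : Freq} (hk : k ≠ 0) : 1 ≤ freqNorm k := by
  unfold GPAM.freqNorm GPAM.enorm2 GPAM.toR
  have hor : k.1 ≠ 0 ∨ k.2 ≠ 0 := by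
    by_contra h; push_neg at h; exact hk (Prod.ext_iff.mpr ⟨h.1, h.2⟩)
  have h2 : (1:ℤ) ≤ k.1^2 + k.2^2 := by
    rcases hor with h | h
    · nlinarith [Int.one_le_abs h, sq_abs k.1, sq_nonneg k.2]
    · nlinarith [Int.one_le_abs h, sq_abs k.2, sq_nonneg k.1]
  have h1 : (1:ℝ) ≤ (k.1:ℝ)^2 + (k.2:ℝ)^2 := by exact_mod_cast h2
  calc (1:ℝ) = Real.sqrt 1 := Real.sqrt_one.symm
    _ ≤ _ := Real.sqrt_le_sqrt h1

lemma freqNorm_zero : freqNorm (0 : Freq) = 0 := by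
  simp [GPAM.freqNorm, GPAM.enorm2, GPAM.toR]

lemma freqNorm_one_zero : freqNorm ((1, 0) : Freq) = 1 := by
  simp [GPAM.freqNorm, GPAM.enorm2, GPAM.toR]

lemma enorm2_smul {t : ℝ} (ht : 0 ≤ t) (x : ℝ × ℝ) : enorm2 (t • x) = t * enorm2 x := by
  unfold GPAM.enorm2
  simp only [Prod.smul_fst, Prod.smul_snd, smul_eq_mul]
  rw [show (t * x.1)^2 + (t * x.2)^2 = t^2 * (x.1^2 + x.2^2) by ring,
    Real.sqrt_mul (sq_nonneg t), Real.sqrt_sq ht]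

lemma enn_norm_tsum_le {ι : Type} {E : Type*} [NormedAddCommGroup E] [CompleteSpace E]
    (f : ι → E) : (‖∑' i, f i‖₊ : ℝ≥0∞) ≤ ∑' i, (‖f i‖₊ : ℝ≥0∞) := by
  by_cases h : Summable fun i => ‖f i‖₊
  · rw [← ENNReal.coe_tsum h]
    exact ENNReal.coe_le_coe.mpr (nnnorm_tsum_le h)
  · have ht : (∑' i, (‖f i‖₊ : ℝ≥0∞)) = ⊤ := by
      by_contra h'
      exact h (ENNReal.tsum_coe_ne_top_iff_summable.1 h')
    rw [ht]; exact le_top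

lemma mul_le_mul_self_add_mul_self (a b : ℝ≥0∞) : a * b ≤ a * a + b * b := by
  rcases le_total a b with h | h
  · exact le_trans (mul_le_mul_left h b) le_add_self
  · exact le_trans (mul_le_mul_right h a) le_self_add

lemma tsum_pair (f g : ℤ → ℝ≥0∞) (a b c : ℝ≥0∞) :
    ∑' ij : ℤ × ℤ, a * (f ij.1 * b) * (g ij.2 * c)
      = a * b * c * ((∑' i, f i) * (∑' j, g j)) := by
  rw [ENNReal.tsum_prod']
  calc ∑' i, ∑' j, a * (f i * b) * (g j * c)
      = ∑' i, ∑' j, (a * (f i * b) * c) * g j :=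
        tsum_congr fun i => tsum_congr fun j => by ring
    _ = ∑' i, (a * (f i * b) * c) * ∑' j, g j :=
        tsum_congr fun i => ENNReal.tsum_mul_left
    _ = ∑' i, (a * b * c * (∑' j, g j)) * f i :=
        tsum_congr fun i => by ring
    _ = (a * b * c * (∑' j, g j)) * ∑' i, f i := ENNReal.tsum_mul_left
    _ = a * b * c * ((∑' i, f i) * (∑' j, g j)) := by ring

/-- The Littlewood-Paley weight of `Δ_i` at frequency-space point `x`. -/
def W (L : LP) (i : ℤ) (x : ℝ × ℝ) : ℝ :=
  if i = -1 then L.chi x else L.rho ((2 : ℝ) ^ (-i) • x)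

lemma block_eq (L : LP) (i : ℤ) (a : Dist) (k : Freq) :
    L.block i a k = ((W L i (toR k) : ℝ) : ℂ) * a k := by
  unfold LP.block W
  split <;> rfl

lemma W_nonneg (L : LP) (i : ℤ) (x : ℝ × ℝ) : 0 ≤ W L i x := by
  unfold W; split
  · exact L.chi_nonneg x
  · exact L.rho_nonneg _

lemma rho_summable (L : LP) (x : ℝ × ℝ) :
    Summable (fun j : ℕ => L.rho ((2 : ℝ) ^ (-(j : ℤ)) • x)) := by
  by_cases h : ∀ j : ℕ, L.rho ((2 : ℝ) ^ (-(j : ℤ)) • x) = 0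
  · exact (summable_zero).congr (fun j => (h j).symm)
  · push_neg at h
    obtain ⟨m, hm⟩ := h
    apply summable_of_finite_support
    apply Set.Finite.subset (Set.finite_Icc (m - 1) (m + 1))
    intro j hj
    simp only [Function.mem_support] at hj
    by_contra hj'
    simp only [Set.mem_Icc, not_and_or, not_le] at hj'
    have habs : 1 < |(j : ℤ) - (m : ℤ)| := by rw [lt_abs]; omega
    rcases mul_eq_zero.1 (L.disj_rho_rho j m habs x) with h0 | h0
    · exact hj h0
    · exact hm h0

/-- `eW` : the weight as an extended nonneg real, cut off to `i ≥ -1`. -/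
def eW (L : LP) (i : ℤ) (x : ℝ × ℝ) : ℝ≥0∞ :=
  if -1 ≤ i then ENNReal.ofReal (W L i x) else 0

lemma eW_of_le (L : LP) {i : ℤ} (hi : -1 ≤ i) (x : ℝ × ℝ) :
    eW L i x = ENNReal.ofReal (W L i x) := if_pos hi

lemma tsum_eW (L : LP) (x : ℝ × ℝ) : ∑' i : ℤ, eW L i x = 1 := by
  have hinj : Function.Injective (fun j : ℕ => (j : ℤ) - 1) := by
    intro a b h
    simp only at h
    omega
  have hsupp : Function.support (fun i : ℤ => eW L i x) ⊆
      Set.range (fun j : ℕ => (j : ℤ) - 1) := by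
    intro i hi
    have h1 : -1 ≤ i := by
      by_contra h
      exact hi (by simp [eW, h])
    exact ⟨(i + 1).toNat, by show ((i + 1).toNat : ℤ) - 1 = i; omega⟩
  rw [← Function.Injective.tsum_eq hinj hsupp]
  have hW : ∀ j : ℕ, eW L ((j : ℤ) - 1) x = ENNReal.ofReal (W L ((j : ℤ) - 1) x) :=
    fun j => if_pos (by omega)
  have hgnn : ∀ j : ℕ, 0 ≤ W L ((j : ℤ) - 1) x := fun j => W_nonneg L _ x
  have hgs : (fun j : ℕ => W L (((j + 1 : ℕ) : ℤ) - 1) x)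
      = fun j : ℕ => L.rho ((2 : ℝ) ^ (-(j : ℤ)) • x) := by
    funext j
    unfold W
    rw [if_neg (by omega)]
    have h1 : -(((j + 1 : ℕ) : ℤ) - 1) = -(j : ℤ) := by push_cast; ring
    rw [h1]
  have hsum : Summable (fun j : ℕ => W L ((j : ℤ) - 1) x) := by
    rw [← summable_nat_add_iff 1]
    rw [hgs]
    exact rho_summable L x
  have hA : ∑' j : ℕ, eW L ((j : ℤ) - 1) x
      = ENNReal.ofReal (∑' j : ℕ, W L ((j : ℤ) - 1) x) := by
    rw [ENNReal.ofReal_tsum_of_nonneg hgnn hsum]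
    exact tsum_congr hW
  rw [hA, hsum.tsum_eq_zero_add]
  have hg0 : W L (((0 : ℕ) : ℤ) - 1) x = L.chi x := by
    unfold W
    rw [if_pos (by norm_num)]
  rw [hg0, hgs, L.partition x, ENNReal.ofReal_one]

end RKB

namespace RKB
open GPAM ENNReal

lemma W_supp_upper (L : LP) {Rc r R : ℝ} (hRc : 0 < Rc) (hR : 0 < R)
    (hchi : ∀ x, Rc ≤ enorm2 x → L.chi x = 0)
    (hrho : ∀ x, enorm2 x < r ∨ R < enorm2 x → L.rho x = 0)
    {i : ℤ} {x : ℝ × ℝ} (hx : W L i x ≠ 0) :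
    enorm2 x ≤ (2 * (Rc + R)) * 2 ^ i := by
  by_cases hi1 : i = -1
  · subst hi1
    have hx' : L.chi x ≠ 0 := by simpa [W] using hx
    have hlt : enorm2 x < Rc := by
      by_contra h
      exact hx' (hchi x (le_of_not_gt h))
    have h2 : (2 * (Rc + R)) * (2:ℝ) ^ (-1 : ℤ) = Rc + R := by
      rw [zpow_neg_one]; ring
    rw [h2]; linarith
  · have hx' : L.rho ((2:ℝ) ^ (-i) • x) ≠ 0 := by simpa [W, hi1] using hx
    have hle : enorm2 ((2:ℝ) ^ (-i) • x) ≤ R := by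
      by_contra h
      exact hx' (hrho _ (Or.inr (lt_of_not_ge h)))
    rw [enorm2_smul (by positivity : (0:ℝ) ≤ (2:ℝ) ^ (-i))] at hle
    have h2 : (0:ℝ) < (2:ℝ) ^ i := by positivity
    have h3 := mul_le_mul_of_nonneg_right hle h2.le
    have h4 : (2:ℝ) ^ (-i) * (2:ℝ) ^ i = 1 := by
      rw [← zpow_add₀ (two_ne_zero)]; simp
    have h5 : (2:ℝ) ^ (-i) * enorm2 x * (2:ℝ) ^ i = enorm2 x := by
      rw [mul_comm ((2:ℝ) ^ (-i)) _, mul_assoc, h4, mul_one]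
    have h6 : enorm2 x ≤ R * 2 ^ i := by linarith
    nlinarith

lemma W_supp_lower (L : LP) {r R : ℝ}
    (hrho : ∀ x, enorm2 x < r ∨ R < enorm2 x → L.rho x = 0)
    {i : ℤ} (hi : 0 ≤ i) {x : ℝ × ℝ} (hx : W L i x ≠ 0) :
    r * 2 ^ i ≤ enorm2 x := by
  have hi1 : i ≠ -1 := by omega
  have hx' : L.rho ((2:ℝ) ^ (-i) • x) ≠ 0 := by simpa [W, hi1] using hx
  have hge : r ≤ enorm2 ((2:ℝ) ^ (-i) • x) := by
    by_contra h
    exact hx' (hrho _ (Or.inl (lt_of_not_ge h)))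
  rw [enorm2_smul (by positivity : (0:ℝ) ≤ (2:ℝ) ^ (-i))] at hge
  have h2 : (0:ℝ) < (2:ℝ) ^ i := by positivity
  have h3 := mul_le_mul_of_nonneg_right hge h2.le
  have h4 : (2:ℝ) ^ (-i) * (2:ℝ) ^ i = 1 := by
    rw [← zpow_add₀ (two_ne_zero)]; simp
  have h5 : (2:ℝ) ^ (-i) * enorm2 x * (2:ℝ) ^ i = enorm2 x := by
    rw [mul_comm ((2:ℝ) ^ (-i)) _, mul_assoc, h4, mul_one]
  linarith

lemma term_bound (L : LP) {Rc r R : ℝ} (hRc : 0 < Rc) (hr : 0 < r) (hrR : r < R)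
    (hchi : ∀ x, Rc ≤ enorm2 x → L.chi x = 0)
    (hrho : ∀ x, enorm2 x < r ∨ R < enorm2 x → L.rho x = 0)
    (θ : Dist) (k p : Freq) {i j : ℤ} (hi : -1 ≤ i) (hj : -1 ≤ j) (hij : |i - j| ≤ 1) :
    ‖L.block i θ p * L.block j (Kop θ) (k - p)‖ ≤
      ((1 + (max (2 * (2 * (Rc + R)) / r) (2 * (Rc + R)) + 1) ^ 2) / (1 + freqNorm k ^ 2)) *
        (W L i (toR p) * ‖θ p‖) * (W L j (toR (k - p)) * ‖θ (k - p)‖) := by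
  have hR : 0 < R := lt_trans hr hrR
  have hM : (0:ℝ) < 2 * (Rc + R) := by linarith
  have hc0 : (0:ℝ) < max (2 * (2 * (Rc + R)) / r) (2 * (Rc + R)) :=
    lt_of_lt_of_le hM (le_max_right _ _)
  have h1k : (0:ℝ) < 1 + freqNorm k ^ 2 := by positivity
  have hA : (0:ℝ) < 1 + (max (2 * (2 * (Rc + R)) / r) (2 * (Rc + R)) + 1) ^ 2 := by positivity
  rw [block_eq, block_eq]
  simp only [norm_mul, Complex.norm_real, Real.norm_eq_abs]
  rw [abs_of_nonneg (W_nonneg L i _), abs_of_nonneg (W_nonneg L j _)]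
  by_cases hWi : W L i (toR p) = 0
  · simp [hWi]
  by_cases hWj : W L j (toR (k - p)) = 0
  · simp [hWj]
  by_cases hq : k - p = 0
  · have h0 : Kop θ (k - p) = 0 := by rw [hq]; simp [Kop]
    rw [h0, norm_zero, mul_zero, mul_zero]
    apply mul_nonneg (mul_nonneg (by positivity) _) _
    · exact mul_nonneg (W_nonneg L i _) (norm_nonneg _)
    · exact mul_nonneg (W_nonneg L j _) (norm_nonneg _)
  -- main case
  have hq1 : 1 ≤ freqNorm (k - p) := one_le_freqNorm hq
  have hq2 : (0:ℝ) < freqNorm (k - p) ^ 2 := by nlinarith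
  have hKnorm : ‖Kop θ (k - p)‖ = ‖θ (k - p)‖ / freqNorm (k - p) ^ 2 := by
    unfold Kop
    rw [if_neg hq, norm_div, Complex.norm_real, Real.norm_eq_abs, abs_of_nonneg (sq_nonneg _)]
  rw [hKnorm]
  have hup : freqNorm p ≤ (2 * (Rc + R)) * 2 ^ i :=
    W_supp_upper L hRc hR hchi hrho hWi
  have key2 : freqNorm p ≤ (max (2 * (2 * (Rc + R)) / r) (2 * (Rc + R))) * freqNorm (k - p) := by
    rcases (by omega : j = -1 ∨ 0 ≤ j) with hj' | hj'
    · have hi0 : i ≤ 0 := by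
        rw [abs_le] at hij; omega
      have h2i : (2:ℝ) ^ i ≤ 1 := by
        calc (2:ℝ) ^ i ≤ 2 ^ (0:ℤ) := by
              apply zpow_le_zpow_right₀ (by norm_num) hi0
          _ = 1 := by norm_num
      calc freqNorm p ≤ (2 * (Rc + R)) * 2 ^ i := hup
        _ ≤ (2 * (Rc + R)) * 1 := by nlinarith
        _ ≤ (2 * (Rc + R)) * freqNorm (k - p) := by nlinarith
        _ ≤ _ := mul_le_mul_of_nonneg_right (le_max_right _ _) (by linarith)
    · have hlow : r * 2 ^ j ≤ freqNorm (k - p) := W_supp_lower L hrho hj' hWj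
      have hij' : i ≤ j + 1 := by rw [abs_le] at hij; omega
      have h2 : (2:ℝ) ^ i ≤ 2 * 2 ^ j := by
        calc (2:ℝ) ^ i ≤ 2 ^ (j + 1) := by
              apply zpow_le_zpow_right₀ (by norm_num) hij'
          _ = 2 * 2 ^ j := by rw [zpow_add_one₀ (two_ne_zero)]; ring
      have h2j : (0:ℝ) < (2:ℝ) ^ j := by positivity
      calc freqNorm p ≤ (2 * (Rc + R)) * 2 ^ i := hup
        _ ≤ (2 * (Rc + R)) * (2 * 2 ^ j) := by nlinarith
        _ = (2 * (2 * (Rc + R)) / r) * (r * 2 ^ j) := by field_simp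
        _ ≤ (2 * (2 * (Rc + R)) / r) * freqNorm (k - p) := by
            apply mul_le_mul_of_nonneg_left hlow (by positivity)
        _ ≤ _ := mul_le_mul_of_nonneg_right (le_max_left _ _) (by linarith)
  have htri : freqNorm k ≤ freqNorm p + freqNorm (k - p) := by
    have h := freqNorm_add p (k - p)
    rwa [show p + (k - p) = k by ring] at h
  have hkq : 1 + freqNorm k ^ 2 ≤
      (1 + (max (2 * (2 * (Rc + R)) / r) (2 * (Rc + R)) + 1) ^ 2) * freqNorm (k - p) ^ 2 := by
    have h1 : freqNorm k ≤ (max (2 * (2 * (Rc + R)) / r) (2 * (Rc + R)) + 1) * freqNorm (k - p) := by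
      nlinarith
    nlinarith [freqNorm_nonneg k, sq_nonneg ((max (2 * (2 * (Rc + R)) / r) (2 * (Rc + R)) + 1) * freqNorm (k - p) - freqNorm k)]
  have h1q : 1 / freqNorm (k - p) ^ 2 ≤
      (1 + (max (2 * (2 * (Rc + R)) / r) (2 * (Rc + R)) + 1) ^ 2) / (1 + freqNorm k ^ 2) := by
    rw [div_le_div_iff₀ hq2 h1k]
    nlinarith
  have hnn : 0 ≤ W L i (toR p) * ‖θ p‖ * (W L j (toR (k - p)) * ‖θ (k - p)‖) :=
    mul_nonneg (mul_nonneg (W_nonneg L i _) (norm_nonneg _))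
      (mul_nonneg (W_nonneg L j _) (norm_nonneg _))
  calc W L i (toR p) * ‖θ p‖ * (W L j (toR (k - p)) * (‖θ (k - p)‖ / freqNorm (k - p) ^ 2))
      = (W L i (toR p) * ‖θ p‖ * (W L j (toR (k - p)) * ‖θ (k - p)‖)) * (1 / freqNorm (k - p) ^ 2) := by
        ring
    _ ≤ (W L i (toR p) * ‖θ p‖ * (W L j (toR (k - p)) * ‖θ (k - p)‖)) *
        ((1 + (max (2 * (2 * (Rc + R)) / r) (2 * (Rc + R)) + 1) ^ 2) / (1 + freqNorm k ^ 2)) :=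
        mul_le_mul_of_nonneg_left h1q hnn
    _ = _ := by ring

end RKB

namespace RKB
open GPAM ENNReal

lemma reson_pointwise (L : LP) {Rc r R : ℝ} (hRc : 0 < Rc) (hr : 0 < r) (hrR : r < R)
    (hchi : ∀ x, Rc ≤ enorm2 x → L.chi x = 0)
    (hrho : ∀ x, enorm2 x < r ∨ R < enorm2 x → L.rho x = 0)
    (θ : Dist) (hθsum : Summable fun p : Freq => ‖θ p‖ ^ 2) (k : Freq) :
    ‖L.reson θ (Kop θ) k‖ ≤
      2 * (1 + (max (2 * (2 * (Rc + R)) / r) (2 * (Rc + R)) + 1) ^ 2) *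
        (∑' p : Freq, ‖θ p‖ ^ 2) / (1 + freqNorm k ^ 2) := by
  have hR : 0 < R := lt_trans hr hrR
  have hA : (0:ℝ) < 1 + (max (2 * (2 * (Rc + R)) / r) (2 * (Rc + R)) + 1) ^ 2 := by positivity
  have h1k : (0:ℝ) < 1 + freqNorm k ^ 2 := by positivity
  have hX : (0:ℝ) ≤ (1 + (max (2 * (2 * (Rc + R)) / r) (2 * (Rc + R)) + 1) ^ 2) /
      (1 + freqNorm k ^ 2) := div_nonneg hA.le h1k.le
  have hl2 : (0:ℝ) ≤ ∑' p : Freq, ‖θ p‖ ^ 2 := tsum_nonneg fun p => sq_nonneg _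
  -- step 2 : per-pair bound
  have step2 : ∀ ij : ℤ × ℤ,
      (‖(if -1 ≤ ij.1 ∧ -1 ≤ ij.2 ∧ |ij.1 - ij.2| ≤ 1 then
          mulD (L.block ij.1 θ) (L.block ij.2 (Kop θ)) k else 0)‖₊ : ℝ≥0∞) ≤
        ∑' p : Freq, ENNReal.ofReal ((1 + (max (2 * (2 * (Rc + R)) / r) (2 * (Rc + R)) + 1) ^ 2) /
            (1 + freqNorm k ^ 2)) *
          (eW L ij.1 (toR p) * ENNReal.ofReal ‖θ p‖) *
          (eW L ij.2 (toR (k - p)) * ENNReal.ofReal ‖θ (k - p)‖) := by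
    intro ij
    by_cases hcond : -1 ≤ ij.1 ∧ -1 ≤ ij.2 ∧ |ij.1 - ij.2| ≤ 1
    · rw [if_pos hcond]
      have hmul : mulD (L.block ij.1 θ) (L.block ij.2 (Kop θ)) k
          = ∑' p : Freq, L.block ij.1 θ p * L.block ij.2 (Kop θ) (k - p) := rfl
      rw [hmul]
      refine le_trans (enn_norm_tsum_le _) (ENNReal.tsum_le_tsum fun p => ?_)
      rw [← ENNReal.ofReal_coe_nnreal, coe_nnnorm]
      have hb := term_bound L hRc hr hrR hchi hrho θ k p hcond.1 hcond.2.1 hcond.2.2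
      refine le_trans (ENNReal.ofReal_le_ofReal hb) ?_
      have hWi := W_nonneg L ij.1 (toR p)
      have hWj := W_nonneg L ij.2 (toR (k - p))
      rw [ENNReal.ofReal_mul (mul_nonneg hX (mul_nonneg hWi (norm_nonneg _))),
        ENNReal.ofReal_mul hX, ENNReal.ofReal_mul hWi, ENNReal.ofReal_mul hWj,
        eW_of_le L hcond.1, eW_of_le L hcond.2.1]
    · rw [if_neg hcond]
      simp
  -- step 1 : take the outer sum inside the norm
  have hres : L.reson θ (Kop θ) k = ∑' ij : ℤ × ℤ,
      (if -1 ≤ ij.1 ∧ -1 ≤ ij.2 ∧ |ij.1 - ij.2| ≤ 1 then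
        mulD (L.block ij.1 θ) (L.block ij.2 (Kop θ)) k else 0) := rfl
  have step1 : (‖L.reson θ (Kop θ) k‖₊ : ℝ≥0∞) ≤
      ∑' ij : ℤ × ℤ, ∑' p : Freq,
        ENNReal.ofReal ((1 + (max (2 * (2 * (Rc + R)) / r) (2 * (Rc + R)) + 1) ^ 2) /
            (1 + freqNorm k ^ 2)) *
          (eW L ij.1 (toR p) * ENNReal.ofReal ‖θ p‖) *
          (eW L ij.2 (toR (k - p)) * ENNReal.ofReal ‖θ (k - p)‖) := by
    rw [hres]
    exact le_trans (enn_norm_tsum_le _) (ENNReal.tsum_le_tsum step2)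
  -- swap the sums and evaluate the i,j sum
  have hinner : ∀ p : Freq, (∑' ij : ℤ × ℤ,
      ENNReal.ofReal ((1 + (max (2 * (2 * (Rc + R)) / r) (2 * (Rc + R)) + 1) ^ 2) /
          (1 + freqNorm k ^ 2)) *
        (eW L ij.1 (toR p) * ENNReal.ofReal ‖θ p‖) *
        (eW L ij.2 (toR (k - p)) * ENNReal.ofReal ‖θ (k - p)‖))
      = ENNReal.ofReal ((1 + (max (2 * (2 * (Rc + R)) / r) (2 * (Rc + R)) + 1) ^ 2) /
          (1 + freqNorm k ^ 2)) *
        (ENNReal.ofReal ‖θ p‖ * ENNReal.ofReal ‖θ (k - p)‖) := by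
    intro p
    have h := tsum_pair (fun i => eW L i (toR p)) (fun j => eW L j (toR (k - p)))
      (ENNReal.ofReal ((1 + (max (2 * (2 * (Rc + R)) / r) (2 * (Rc + R)) + 1) ^ 2) /
          (1 + freqNorm k ^ 2)))
      (ENNReal.ofReal ‖θ p‖) (ENNReal.ofReal ‖θ (k - p)‖)
    rw [tsum_eW, tsum_eW] at h
    rw [h]
    ring
  have step3 : (‖L.reson θ (Kop θ) k‖₊ : ℝ≥0∞) ≤
      ENNReal.ofReal ((1 + (max (2 * (2 * (Rc + R)) / r) (2 * (Rc + R)) + 1) ^ 2) /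
          (1 + freqNorm k ^ 2)) *
        (2 * ENNReal.ofReal (∑' p : Freq, ‖θ p‖ ^ 2)) := by
    refine le_trans step1 ?_
    rw [ENNReal.tsum_comm]
    calc (∑' p : Freq, ∑' ij : ℤ × ℤ,
          ENNReal.ofReal ((1 + (max (2 * (2 * (Rc + R)) / r) (2 * (Rc + R)) + 1) ^ 2) /
              (1 + freqNorm k ^ 2)) *
            (eW L ij.1 (toR p) * ENNReal.ofReal ‖θ p‖) *
            (eW L ij.2 (toR (k - p)) * ENNReal.ofReal ‖θ (k - p)‖))
        = ∑' p : Freq, ENNReal.ofReal ((1 + (max (2 * (2 * (Rc + R)) / r) (2 * (Rc + R)) + 1) ^ 2) /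
              (1 + freqNorm k ^ 2)) *
            (ENNReal.ofReal ‖θ p‖ * ENNReal.ofReal ‖θ (k - p)‖) := tsum_congr hinner
      _ = ENNReal.ofReal ((1 + (max (2 * (2 * (Rc + R)) / r) (2 * (Rc + R)) + 1) ^ 2) /
              (1 + freqNorm k ^ 2)) *
            ∑' p : Freq, ENNReal.ofReal ‖θ p‖ * ENNReal.ofReal ‖θ (k - p)‖ :=
          ENNReal.tsum_mul_left
      _ ≤ _ := by
          refine mul_le_mul_right ?_ _
          calc (∑' p : Freq, ENNReal.ofReal ‖θ p‖ * ENNReal.ofReal ‖θ (k - p)‖)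
              ≤ ∑' p : Freq, (ENNReal.ofReal ‖θ p‖ * ENNReal.ofReal ‖θ p‖ +
                  ENNReal.ofReal ‖θ (k - p)‖ * ENNReal.ofReal ‖θ (k - p)‖) :=
                ENNReal.tsum_le_tsum fun p => mul_le_mul_self_add_mul_self _ _
            _ = (∑' p : Freq, ENNReal.ofReal ‖θ p‖ * ENNReal.ofReal ‖θ p‖) +
                ∑' p : Freq, ENNReal.ofReal ‖θ (k - p)‖ * ENNReal.ofReal ‖θ (k - p)‖ :=
                ENNReal.tsum_add
            _ = (∑' p : Freq, ENNReal.ofReal ‖θ p‖ * ENNReal.ofReal ‖θ p‖) +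
                ∑' p : Freq, ENNReal.ofReal ‖θ p‖ * ENNReal.ofReal ‖θ p‖ := by
                congr 1
                exact (Equiv.subLeft k).tsum_eq
                  (fun p => ENNReal.ofReal ‖θ p‖ * ENNReal.ofReal ‖θ p‖)
            _ = 2 * ∑' p : Freq, ENNReal.ofReal ‖θ p‖ * ENNReal.ofReal ‖θ p‖ := by
                rw [two_mul]
            _ = 2 * ENNReal.ofReal (∑' p : Freq, ‖θ p‖ ^ 2) := by
                congr 1
                rw [ENNReal.ofReal_tsum_of_nonneg (fun p => sq_nonneg _) hθsum]
                exact tsum_congr fun p => by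
                  rw [← ENNReal.ofReal_mul (norm_nonneg _), sq]
  have hconv : (ENNReal.ofReal ((1 + (max (2 * (2 * (Rc + R)) / r) (2 * (Rc + R)) + 1) ^ 2) /
          (1 + freqNorm k ^ 2))) * (2 * ENNReal.ofReal (∑' p : Freq, ‖θ p‖ ^ 2))
      = ENNReal.ofReal (2 * (1 + (max (2 * (2 * (Rc + R)) / r) (2 * (Rc + R)) + 1) ^ 2) *
          (∑' p : Freq, ‖θ p‖ ^ 2) / (1 + freqNorm k ^ 2)) := by
    rw [show 2 * (1 + (max (2 * (2 * (Rc + R)) / r) (2 * (Rc + R)) + 1) ^ 2) *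
          (∑' p : Freq, ‖θ p‖ ^ 2) / (1 + freqNorm k ^ 2)
        = ((1 + (max (2 * (2 * (Rc + R)) / r) (2 * (Rc + R)) + 1) ^ 2) / (1 + freqNorm k ^ 2)) *
          (2 * ∑' p : Freq, ‖θ p‖ ^ 2) by ring]
    rw [ENNReal.ofReal_mul hX, ENNReal.ofReal_mul (by norm_num : (0:ℝ) ≤ 2)]
    norm_num
  rw [← ENNReal.ofReal_coe_nnreal, coe_nnnorm, hconv] at step3
  exact (ENNReal.ofReal_le_ofReal_iff (by positivity)).mp step3

end RKB

namespace RKB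
open GPAM ENNReal

lemma habs_le (a b : ℤ) : ((a.natAbs : ℝ)) ≤ freqNorm (a, b) := by
  have h1 : ((a.natAbs : ℝ)) = |(a : ℝ)| := by
    rw [Nat.cast_natAbs]
    push_cast
    rfl
  rw [h1]
  unfold GPAM.freqNorm GPAM.enorm2 GPAM.toR
  rw [← Real.sqrt_sq_eq_abs]
  apply Real.sqrt_le_sqrt
  nlinarith [sq_nonneg ((b : ℤ) : ℝ)]

lemma habs_le' (a b : ℤ) : ((b.natAbs : ℝ)) ≤ freqNorm (a, b) := by
  have h1 : ((b.natAbs : ℝ)) = |(b : ℝ)| := by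
    rw [Nat.cast_natAbs]
    push_cast
    rfl
  rw [h1]
  unfold GPAM.freqNorm GPAM.enorm2 GPAM.toR
  rw [← Real.sqrt_sq_eq_abs]
  apply Real.sqrt_le_sqrt
  nlinarith [sq_nonneg ((a : ℤ) : ℝ)]

lemma base_summable (γ : ℝ) (hγ : γ < 1) :
    Summable (fun k : Freq => if k = 0 then (0:ℝ) else freqNorm k ^ (2 * γ - 4)) := by
  have h24 : 2 < 4 - 2 * γ := by linarith
  have hE := EisensteinSeries.summable_one_div_norm_rpow h24
  rw [← (finTwoArrowEquiv ℤ).summable_iff]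
  apply Summable.of_nonneg_of_le ?_ ?_ hE
  · intro x
    simp only [Function.comp_apply]
    split
    · exact le_refl 0
    · exact Real.rpow_nonneg (freqNorm_nonneg _) _
  · intro x
    simp only [Function.comp_apply]
    by_cases hx : x = 0
    · subst hx
      have h0 : finTwoArrowEquiv ℤ (0 : Fin 2 → ℤ) = 0 := rfl
      rw [h0, if_pos rfl]
      exact Real.rpow_nonneg (norm_nonneg _) _
    · have hx' : finTwoArrowEquiv ℤ x ≠ 0 := by
        intro h
        apply hx
        have h2 := congrArg (finTwoArrowEquiv ℤ).symm h
        rw [Equiv.symm_apply_apply] at h2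
        rw [h2]
        funext i
        fin_cases i <;> rfl
      rw [if_neg hx']
      rw [show 2 * γ - 4 = -(4 - 2 * γ) by ring]
      apply Real.rpow_le_rpow_of_nonpos (norm_pos_iff.mpr hx) ?_ (by linarith)
      rw [EisensteinSeries.norm_eq_max_natAbs]
      have e1 : finTwoArrowEquiv ℤ x = (x 0, x 1) := rfl
      rw [e1, Nat.cast_max]
      exact max_le (habs_le _ _) (habs_le' _ _)

lemma delta_summable : Summable (fun k : Freq => if k = 0 then (1:ℝ) else 0) := by
  apply summable_of_ne_finset_zero (s := {(0 : Freq)})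
  intro b hb
  rw [if_neg (by simpa using hb)]

lemma weight_ptwise (γ : ℝ) (hγ : γ < 1) (k : Freq) :
    (1 + freqNorm k ^ 2) ^ (γ - 2) ≤
      (if k = 0 then (1:ℝ) else 0) + (if k = 0 then (0:ℝ) else freqNorm k ^ (2 * γ - 4)) := by
  by_cases hk : k = 0
  · subst hk
    rw [if_pos rfl, if_pos rfl, freqNorm_zero]
    norm_num
  · rw [if_neg hk, if_neg hk, zero_add]
    have h1 : 1 ≤ freqNorm k := one_le_freqNorm hk
    have h2 : (1 + freqNorm k ^ 2) ^ (γ - 2) ≤ (freqNorm k ^ 2) ^ (γ - 2) :=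
      Real.rpow_le_rpow_of_nonpos (by nlinarith) (by nlinarith) (by linarith)
    refine h2.trans (le_of_eq ?_)
    rw [← Real.rpow_natCast (freqNorm k) 2, ← Real.rpow_mul (freqNorm_nonneg k)]
    congr 1
    push_cast
    ring

lemma weight_summable (γ : ℝ) (hγ : γ < 1) :
    Summable (fun k : Freq => (1 + freqNorm k ^ 2) ^ (γ - 2)) := by
  apply Summable.of_nonneg_of_le
    (fun k => Real.rpow_nonneg (by positivity) _) (weight_ptwise γ hγ)
  exact delta_summable.add (base_summable γ hγ)

end RKB

/-- For `θ ∈ ℋ` (zero-mean `L²(𝕋²)`) and `γ < 1`, the resonant product `θ∘Kθ` lies in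
`H^γ(𝕋²)` with `‖θ∘Kθ‖²_{H^γ} ≲ ‖θ‖⁴_{L²} Σ_{k≠0} |k|^{2γ-4}`, the series being
finite for `γ < 1`. -/
theorem reson_Kop_sobolev_bound (γ : ℝ) (hγ : γ < 1) (L : GPAM.LP) :
    Summable (fun k : GPAM.Freq =>
        if k = 0 then (0 : ℝ) else GPAM.freqNorm k ^ (2 * γ - 4)) ∧
      ∃ C : ℝ, 0 < C ∧ ∀ θ : GPAM.Dist, GPAM.IsZeroMeanL2 θ →
        Summable (fun k : GPAM.Freq =>
          (1 + GPAM.freqNorm k ^ 2) ^ γ * ‖L.reson θ (GPAM.Kop θ) k‖ ^ 2) ∧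
        GPAM.sobSum γ (L.reson θ (GPAM.Kop θ))
          ≤ C * GPAM.l2norm θ ^ 4 *
            ∑' k : GPAM.Freq,
              if k = 0 then (0 : ℝ) else GPAM.freqNorm k ^ (2 * γ - 4) := by
  classical
  open GPAM RKB in
  obtain ⟨Rc, hRc, hchi⟩ := L.chi_ball
  obtain ⟨r, R, hr, hrR, hrho⟩ := L.rho_annulus
  have hs : Summable (fun k : Freq => if k = 0 then (0:ℝ) else freqNorm k ^ (2 * γ - 4)) :=
    base_summable γ hγ
  have hA0 : (0:ℝ) < 1 + (max (2 * (2 * (Rc + R)) / r) (2 * (Rc + R)) + 1) ^ 2 := by positivity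
  refine ⟨hs, 8 * (1 + (max (2 * (2 * (Rc + R)) / r) (2 * (Rc + R)) + 1) ^ 2) ^ 2,
    by positivity, ?_⟩
  intro θ hθ
  obtain ⟨hθ0, hθsum, -⟩ := hθ
  have key : ∀ k : Freq, ‖L.reson θ (Kop θ) k‖ ≤
      2 * (1 + (max (2 * (2 * (Rc + R)) / r) (2 * (Rc + R)) + 1) ^ 2) *
        (∑' p : Freq, ‖θ p‖ ^ 2) / (1 + freqNorm k ^ 2) :=
    fun k => reson_pointwise L hRc hr hrR hchi hrho θ hθsum k
  set A : ℝ := 1 + (max (2 * (2 * (Rc + R)) / r) (2 * (Rc + R)) + 1) ^ 2 with hAdef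
  set l2 : ℝ := ∑' p : Freq, ‖θ p‖ ^ 2 with hl2def
  have hl2 : 0 ≤ l2 := tsum_nonneg fun p => sq_nonneg _
  have hl2norm : GPAM.l2norm θ ^ 4 = l2 ^ 2 := by
    rw [GPAM.l2norm, show (4:ℕ) = 2 * 2 from rfl, pow_mul, Real.sq_sqrt hl2]
  have hwsum : Summable (fun k : Freq => (1 + freqNorm k ^ 2) ^ (γ - 2)) :=
    weight_summable γ hγ
  have hpoint : ∀ k : Freq, (1 + freqNorm k ^ 2) ^ γ * ‖L.reson θ (Kop θ) k‖ ^ 2 ≤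
      (2 * A * l2) ^ 2 * (1 + freqNorm k ^ 2) ^ (γ - 2) := by
    intro k
    have h1k : (0:ℝ) < 1 + freqNorm k ^ 2 := by positivity
    have h2 : ‖L.reson θ (Kop θ) k‖ ^ 2 ≤ (2 * A * l2 / (1 + freqNorm k ^ 2)) ^ 2 :=
      pow_le_pow_left₀ (norm_nonneg _) (key k) 2
    calc (1 + freqNorm k ^ 2) ^ γ * ‖L.reson θ (Kop θ) k‖ ^ 2
        ≤ (1 + freqNorm k ^ 2) ^ γ * (2 * A * l2 / (1 + freqNorm k ^ 2)) ^ 2 :=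
          mul_le_mul_of_nonneg_left h2 (Real.rpow_nonneg h1k.le γ)
      _ = (2 * A * l2) ^ 2 * ((1 + freqNorm k ^ 2) ^ γ / (1 + freqNorm k ^ 2) ^ (2:ℕ)) := by
          rw [div_pow]; ring
      _ = (2 * A * l2) ^ 2 * (1 + freqNorm k ^ 2) ^ (γ - 2) := by
          congr 1
          rw [← Real.rpow_natCast (1 + freqNorm k ^ 2) 2, ← Real.rpow_sub h1k]
          norm_num
  have hsummable : Summable (fun k : Freq =>
      (1 + freqNorm k ^ 2) ^ γ * ‖L.reson θ (Kop θ) k‖ ^ 2) := by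
    apply Summable.of_nonneg_of_le
      (fun k => mul_nonneg (Real.rpow_nonneg (by positivity) _) (sq_nonneg _)) hpoint
    exact hwsum.mul_left _
  refine ⟨hsummable, ?_⟩
  have hterm_nonneg : ∀ b : Freq, 0 ≤ (if b = 0 then (0:ℝ) else freqNorm b ^ (2 * γ - 4)) := by
    intro b
    split
    · exact le_refl 0
    · exact Real.rpow_nonneg (freqNorm_nonneg _) _
  have hS1 : (1:ℝ) ≤ ∑' k : Freq, (if k = 0 then (0:ℝ) else freqNorm k ^ (2 * γ - 4)) := by
    have h10 : ((1, 0) : Freq) ≠ 0 := by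
      simp [Prod.ext_iff]
    have hval : (if ((1,0) : Freq) = 0 then (0:ℝ) else freqNorm ((1,0) : Freq) ^ (2 * γ - 4)) = 1 := by
      rw [if_neg h10, freqNorm_one_zero, Real.one_rpow]
    calc (1:ℝ) = _ := hval.symm
      _ ≤ _ := Summable.le_tsum hs ((1,0) : Freq) (fun b _ => hterm_nonneg b)
  set S : ℝ := ∑' k : Freq, (if k = 0 then (0:ℝ) else freqNorm k ^ (2 * γ - 4)) with hSdef
  have hchain : GPAM.sobSum γ (L.reson θ (Kop θ)) ≤ (2 * A * l2) ^ 2 * (1 + S) := by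
    have hsob : GPAM.sobSum γ (L.reson θ (Kop θ))
        = ∑' k : Freq, (1 + freqNorm k ^ 2) ^ γ * ‖L.reson θ (Kop θ) k‖ ^ 2 := rfl
    rw [hsob]
    calc ∑' k : Freq, (1 + freqNorm k ^ 2) ^ γ * ‖L.reson θ (Kop θ) k‖ ^ 2
        ≤ ∑' k : Freq, (2 * A * l2) ^ 2 * (1 + freqNorm k ^ 2) ^ (γ - 2) :=
          Summable.tsum_le_tsum hpoint hsummable (hwsum.mul_left _)
      _ = (2 * A * l2) ^ 2 * ∑' k : Freq, (1 + freqNorm k ^ 2) ^ (γ - 2) := tsum_mul_left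
      _ ≤ (2 * A * l2) ^ 2 * (1 + S) := by
          apply mul_le_mul_of_nonneg_left ?_ (sq_nonneg _)
          calc ∑' k : Freq, (1 + freqNorm k ^ 2) ^ (γ - 2)
              ≤ ∑' k : Freq, ((if k = 0 then (1:ℝ) else 0) +
                  (if k = 0 then (0:ℝ) else freqNorm k ^ (2 * γ - 4))) :=
                Summable.tsum_le_tsum (weight_ptwise γ hγ) hwsum (delta_summable.add hs)
            _ = (∑' k : Freq, if k = 0 then (1:ℝ) else 0) + S :=
                Summable.tsum_add delta_summable hs
            _ = 1 + S := by rw [tsum_ite_eq]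
  have hfinal : (2 * A * l2) ^ 2 * (1 + S) ≤
      8 * A ^ 2 * GPAM.l2norm θ ^ 4 * S := by
    rw [hl2norm]
    have hhint : 0 ≤ A ^ 2 * l2 ^ 2 * (S - 1) :=
      mul_nonneg (mul_nonneg (sq_nonneg A) (sq_nonneg l2)) (by linarith)
    nlinarith [hhint]
  calc GPAM.sobSum γ (L.reson θ (Kop θ)) ≤ (2 * A * l2) ^ 2 * (1 + S) := hchain
    _ ≤ 8 * A ^ 2 * GPAM.l2norm θ ^ 4 * S := hfinal
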